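/- If P is a convex lattice polygon with lattice diameter equal to 1 (i.e., no 3 collinear lattice points in P), then P contains at most 4 lattice points. -/

import Mathlib

/-!
Among five lattice points two, `r` and `s`, agree in both coordinates modulo 2, so their
midpoint is again a lattice point. It lies in `P` by convexity, and `r`, the midpoint and `s` are
three distinct collinear lattice points of `P`.
-/

/-- The canonical embedding of `ℤ × ℤ` into `ℝ × ℝ`. -/
noncomputable def latticeCast (p : ℤ × ℤ) : ℝ × ℝ := ((p.1 : ℝ), (p.2 : ℝ))

theorem latticeCast_injective : Function.Injective latticeCast := by
  intro p q h
  simp only [latticeCast, Prod.mk.injEq, Int.cast_inj] at h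
  exact Prod.ext h.1 h.2

theorem exists_ne_parity_eq_of_four_lt_ncard {S : Set (ℤ × ℤ)} (hS : 4 < S.ncard) :
    ∃ r ∈ S, ∃ s ∈ S, r ≠ s ∧ (r.1 : ZMod 2) = s.1 ∧ (r.2 : ZMod 2) = s.2 := by
  have hcard : (Set.univ : Set (ZMod 2 × ZMod 2)).ncard < S.ncard := by
    rwa [Set.ncard_univ, Nat.card_eq_fintype_card, Fintype.card_prod, ZMod.card]
  obtain ⟨r, hr, s, hs, hrs, hparity⟩ := Set.exists_ne_map_eq_of_ncard_lt_of_maps_to hcard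
    (f := fun p : ℤ × ℤ => ((p.1 : ZMod 2), (p.2 : ZMod 2))) (fun _ _ => Set.mem_univ _)
  exact ⟨r, hr, s, hs, hrs, Prod.ext_iff.mp hparity⟩

theorem exists_latticeCast_eq_midpoint {r s : ℤ × ℤ} (h₁ : (r.1 : ZMod 2) = s.1)
    (h₂ : (r.2 : ZMod 2) = s.2) :
    ∃ m, latticeCast m = midpoint ℝ (latticeCast r) (latticeCast s) := by
  obtain ⟨a, ha⟩ := (ZMod.intCast_eq_intCast_iff_dvd_sub _ _ _).mp h₁
  obtain ⟨b, hb⟩ := (ZMod.intCast_eq_intCast_iff_dvd_sub _ _ _).mp h₂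
  push_cast at ha hb
  refine ⟨(r.1 + a, r.2 + b), ?_⟩
  have ha' : (s.1 : ℝ) = r.1 + 2 * a := by exact_mod_cast (by linarith : s.1 = r.1 + 2 * a)
  have hb' : (s.2 : ℝ) = r.2 + 2 * b := by exact_mod_cast (by linarith : s.2 = r.2 + 2 * b)
  rw [midpoint_eq_smul_add]
  ext <;>
    simp only [latticeCast, Int.cast_add, invOf_eq_inv, ha', hb', Prod.mk_add_mk, Prod.smul_mk,
      smul_eq_mul] <;>
    ring

theorem ncard_latticePoints_le_four_of_convex {P : Set (ℝ × ℝ)} (hP : Convex ℝ P)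
    (hld : ∀ r s t : ℤ × ℤ, latticeCast r ∈ P → latticeCast s ∈ P → latticeCast t ∈ P →
      r ≠ s → r ≠ t → s ≠ t →
      ¬ Collinear ℝ ({latticeCast r, latticeCast s, latticeCast t} : Set (ℝ × ℝ))) :
    {r : ℤ × ℤ | latticeCast r ∈ P}.ncard ≤ 4 := by
  by_contra! h
  obtain ⟨r, hr, s, hs, hrs, h₁, h₂⟩ := exists_ne_parity_eq_of_four_lt_ncard h
  obtain ⟨m, hm⟩ := exists_latticeCast_eq_midpoint h₁ h₂
  have hne : latticeCast r ≠ latticeCast s := latticeCast_injective.ne hrs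
  have hmP : latticeCast m ∈ P := hm ▸ hP.midpoint_mem hr hs
  have hrm : r ≠ m := by
    rintro rfl
    exact hne ((midpoint_eq_left_iff ℝ).mp hm.symm)
  have hms : m ≠ s := by
    rintro rfl
    exact hne ((midpoint_eq_right_iff ℝ).mp hm.symm)
  exact hld r m s hr hmP hs hrm hrs hms (hm ▸ (wbtw_midpoint ℝ _ _).collinear)

theorem lattice_diameter_one_at_most_four_points_general (V : Finset (ℤ × ℤ))
    (P : Set (ℝ × ℝ)) (hP : P = convexHull ℝ (latticeCast '' (V : Set (ℤ × ℤ))))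
    (hld : ∀ r s t : ℤ × ℤ, latticeCast r ∈ P → latticeCast s ∈ P → latticeCast t ∈ P →
      r ≠ s → r ≠ t → s ≠ t →
      ¬ Collinear ℝ ({latticeCast r, latticeCast s, latticeCast t} : Set (ℝ × ℝ))) :
    {r : ℤ × ℤ | latticeCast r ∈ P}.ncard ≤ 4 :=
  ncard_latticePoints_le_four_of_convex (hP ▸ convex_convexHull ℝ _) hld

theorem lattice_diameter_one_at_most_four_points (V : Finset (ℤ × ℤ))
    (P : Set (ℝ × ℝ)) (hP : P = convexHull ℝ (latticeCast '' (V : Set (ℤ × ℤ))))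
    (h2dim : ¬ Collinear ℝ (latticeCast '' (V : Set (ℤ × ℤ))))
    (hld : ∀ r s t : ℤ × ℤ, latticeCast r ∈ P → latticeCast s ∈ P → latticeCast t ∈ P →
      r ≠ s → r ≠ t → s ≠ t →
      ¬ Collinear ℝ ({latticeCast r, latticeCast s, latticeCast t} : Set (ℝ × ℝ))) :
    {r : ℤ × ℤ | latticeCast r ∈ P}.ncard ≤ 4 :=
  lattice_diameter_one_at_most_four_points_general V P hP hld
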